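/- For every instance (any number of agents, any picking sequence π, any truthful profile ≻) and for every utility profile u = (u_1,…,u_n) in which each u_i is consistent with ≻_i, the bluff profile is a pure Nash equilibrium of the sequential allocation game under u. -/

import Mathlib

open Finset

section SeqAlloc

variable {A : Type*} [DecidableEq A] {α : Type*} [DecidableEq α]

/-- One run of sequential allocation: the list of (agent, item) pick events.
At each turn the scheduled agent receives his most preferred not-yet-taken item. -/
def SAevents (prefs : A → List α) : List A → List α → List (A × α)
  | [], _ => []
  | a :: rest, taken =>
    match ((prefs a).filter (fun o => !(taken.contains o))).head? with
    | some o => (a, o) :: SAevents prefs rest (o :: taken)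
    | none => SAevents prefs rest taken

/-- The order in which items are picked under picking sequence `π` and reports `prefs`. -/
def pickOrder (π : List A) (prefs : A → List α) : List α :=
  (SAevents prefs π []).map Prod.snd

/-- The set of items that agent `i` receives. -/
def SAalloc (π : List A) (prefs : A → List α) (i : A) : Finset α :=
  (((SAevents prefs π []).filter (fun p => p.1 == i)).map Prod.snd).toFinset

/-- A valid ranking (strict total order) on the items, given as an ordered list of all items. -/
def IsRanking [Fintype α] (L : List α) : Prop := L.Nodup ∧ ∀ o : α, o ∈ L

/-- `o` is strictly preferred to `o'` according to ranking `L`. -/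
def Prefers (L : List α) (o o' : α) : Prop := L.idxOf o < L.idxOf o'

instance (L : List α) (o o' : α) : Decidable (Prefers L o o') :=
  inferInstanceAs (Decidable (L.idxOf o < L.idxOf o'))

/-- `u` is a positive utility function consistent with ranking `L`. -/
def Consistent (L : List α) (u : α → ℝ) : Prop :=
  (∀ o, 0 < u o) ∧ ∀ o o', u o > u o' ↔ Prefers L o o'

/-- Additive utility of a set of items. -/
def utilOf (u : α → ℝ) (S : Finset α) : ℝ := ∑ o ∈ S, u o

/-- `u` is lexicographic for ranking `L` : each item is worth more than
all strictly less preferred items together. -/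
def Lexicographic [Fintype α] (L : List α) (u : α → ℝ) : Prop :=
  ∀ o : α, (∑ o' ∈ univ.filter (fun o' => Prefers L o o'), u o') < u o

/-- The reported profile `prof` is a pure Nash equilibrium under utilities `u`. -/
def IsPNE [Fintype α] (π : List A) (prof : A → List α) (u : A → α → ℝ) : Prop :=
  ∀ i (r : List α), IsRanking r →
    utilOf (u i) (SAalloc π (Function.update prof i r) i) ≤
      utilOf (u i) (SAalloc π prof i)

/-- The bluff profile: everyone reports the order in which items are picked
under the truthful profile. -/
def bluff (π : List A) (truth : A → List α) : A → List α := fun _ => pickOrder π truth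

/-- Swap the two agents. -/
def swapAgents : Fin 2 → Fin 2 := fun a => if a = 0 then 1 else 0

/-- The common report of the crossout profile: reverse and invert the picking sequence,
reverse both preferences, run SA and reverse the resulting picking order. -/
def crossoutList (π : List (Fin 2)) (truth : Fin 2 → List α) : List α :=
  (pickOrder (π.reverse.map swapAgents) (fun i => (truth i).reverse)).reverse

/-- The crossout profile: both agents report `crossoutList`. -/
def crossout (π : List (Fin 2)) (truth : Fin 2 → List α) : Fin 2 → List α :=
  fun _ => crossoutList π truth

/-- `S` is at least as preferred as `T` w.r.t. pairwise comparisons under strict order `r`. -/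
def AtLeastPC (r : α → α → Prop) (S T : Finset α) : Prop :=
  ∃ f : α → α, Set.InjOn f T ∧ (∀ o ∈ T, f o ∈ S) ∧ ∀ o ∈ T, f o = o ∨ r (f o) o

/-- An assignment: every item is held by exactly one agent. -/
def IsAssignment (q : A → Finset α) : Prop := ∀ o : α, ∃! i : A, o ∈ q i

/-- The assignment `p` is Pareto optimal with respect to pairwise comparisons
under truthful preferences `truth`. -/
def ParetoOptPC (truth : A → List α) (p : A → Finset α) : Prop :=
  ¬ ∃ q : A → Finset α, IsAssignment q ∧
      (∀ i, AtLeastPC (Prefers (truth i)) (q i) (p i)) ∧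
      ∃ i, AtLeastPC (Prefers (truth i)) (q i) (p i) ∧
        ¬ AtLeastPC (Prefers (truth i)) (p i) (q i)

/-- `r2` is a best response of agent 2 (index `1`) to the leader's ranking `R`. -/
def BestResp2 [Fintype α] (π : List (Fin 2)) (R : List α) (u2 : α → ℝ) (r2 : List α) : Prop :=
  IsRanking r2 ∧ ∀ r2', IsRanking r2' →
    utilOf u2 (SAalloc π ![R, r2'] 1) ≤ utilOf u2 (SAalloc π ![R, r2] 1)

/-- The leader's Stackelberg payoff: the best payoff for agent 1 over the
best responses of agent 2 (ties broken in agent 1's favour). -/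
noncomputable def stackV [Fintype α] (π : List (Fin 2)) (u1 u2 : α → ℝ) (R : List α) : ℝ :=
  sSup {v : ℝ | ∃ r2, BestResp2 π R u2 r2 ∧ v = utilOf u1 (SAalloc π ![R, r2] 0)}

/-- A token move: one token at position `j` moves to a free later position `j' < mm`. -/
def MoveStep (mm : ℕ) (T T' : Finset ℕ) : Prop :=
  ∃ j ∈ T, ∃ j', j' < mm ∧ j' ∉ T ∧ j < j' ∧ T' = insert j' (T.erase j)

/-- One replacement: exchange an item of the set for a strictly more preferred item
not in the set. -/
def ReplaceStep (r : α → α → Prop) (T T' : Finset α) : Prop :=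
  ∃ x ∈ T, ∃ y, y ∉ T ∧ r y x ∧ T' = insert y (T.erase x)

end SeqAlloc



namespace BluffAux
open List

variable {α : Type*} [DecidableEq α]

lemma mem_take_iff_idxOf_lt {x : α} : ∀ (l : List α) (t : ℕ), x ∈ l →
    (x ∈ l.take t ↔ l.idxOf x < t) := by
  intro l
  induction l with
  | nil => simp
  | cons e l ih =>
    intro t hx
    cases t with
    | zero => simp
    | succ t =>
      by_cases he : x = e
      · subst he; simp [List.idxOf_cons_self]
      · have hx' : x ∈ l := by
          rcases List.mem_cons.1 hx with h | h
          · exact absurd h he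
          · exact h
        rw [List.idxOf_cons_ne _ (fun h => he h.symm)]
        simp only [List.take_succ_cons, List.mem_cons]
        constructor
        · rintro (h | h)
          · exact absurd h he
          · have := (ih t hx').1 h; omega
        · intro h
          exact Or.inr ((ih t hx').2 (by omega))

lemma take_perm_erase {x : α} : ∀ (E : List α) (t : ℕ), x ∈ E.take t →
    E.take t ~ x :: (E.erase x).take (t - 1) := by
  intro E
  induction E with
  | nil => simp
  | cons e E ih =>
    intro t h
    cases t with
    | zero => simp at h
    | succ t =>
      by_cases hx : e = x
      · subst hx; simp [List.erase_cons_head]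
      · have hne : (e == x) = false := by simp [hx]
        have hxE : x ∈ E.take t := by
          simp only [List.take_succ_cons, List.mem_cons] at h
          rcases h with h | h
          · exact absurd h.symm hx
          · exact h
        cases t with
        | zero => simp at hxE
        | succ t' =>
          rw [List.erase_cons, if_neg (by simp [hne])]
          simp only [List.take_succ_cons, Nat.add_sub_cancel]
          calc e :: E.take (t' + 1) ~ e :: (x :: (E.erase x).take t') := by
                exact List.Perm.cons e (by simpa using ih (t' + 1) hxE)
            _ ~ x :: e :: (E.erase x).take t' := List.Perm.swap _ _ _

lemma take_erase_of_not_mem {x : α} : ∀ (E : List α) (t : ℕ), x ∉ E.take t →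
    (E.erase x).take t = E.take t := by
  intro E
  induction E with
  | nil => simp
  | cons e E ih =>
    intro t h
    cases t with
    | zero => simp
    | succ t =>
      simp only [List.take_succ_cons, List.mem_cons, not_or] at h
      have hne : e ≠ x := fun hh => h.1 hh.symm
      rw [List.erase_cons, if_neg (by simp [hne]), List.take_succ_cons, ih t h.2,
        List.take_succ_cons]

lemma countP_take_succ_le (p : α → Bool) (l : List α) (t : ℕ) :
    (l.take (t + 1)).countP p ≤ (l.take t).countP p + 1 := by
  rw [List.take_succ, List.countP_append]
  have : (l[t]?.toList).countP p ≤ 1 := by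
    cases h : l[t]? <;> simp [List.countP_cons]
    split <;> omega
  omega

lemma head_filter_min {p : α → Bool} {x : α} : ∀ (l : List α),
    (l.filter p).head? = some x →
    x ∈ l ∧ p x = true ∧ ∀ y ∈ l, p y = true → l.idxOf x ≤ l.idxOf y := by
  intro l
  induction l with
  | nil => simp
  | cons b l ih =>
    intro h
    by_cases pb : p b = true
    · rw [List.filter_cons_of_pos pb] at h
      simp only [List.head?_cons, Option.some.injEq] at h
      subst h
      exact ⟨List.mem_cons_self, pb, fun y hy hpy => by simp [List.idxOf_cons_self]⟩
    · rw [List.filter_cons_of_neg pb] at h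
      obtain ⟨hx, hpx, hmin⟩ := ih h
      have hxb : x ≠ b := fun hh => pb (hh ▸ hpx)
      refine ⟨List.mem_cons_of_mem _ hx, hpx, ?_⟩
      intro y hy hpy
      rcases List.mem_cons.1 hy with rfl | hy'
      · exact absurd hpy pb
      · have hyb : y ≠ b := fun hh => pb (hh ▸ hpy)
        rw [List.idxOf_cons_ne _ (fun h => hxb h.symm),
            List.idxOf_cons_ne _ (fun h => hyb h.symm)]
        exact Nat.succ_le_succ (hmin y hy' hpy)

lemma drop_idxOf {b : α} : ∀ (l₁ l₂ : List α), (l₁ ++ b :: l₂).Nodup →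
    (l₁ ++ b :: l₂).drop ((l₁ ++ b :: l₂).idxOf b) = b :: l₂ := by
  intro l₁
  induction l₁ with
  | nil => intro l₂ _; simp [List.idxOf_cons_self]
  | cons a l₁ ih =>
    intro l₂ hnd
    rw [List.cons_append] at hnd ⊢
    have hab : a ≠ b := by
      intro h; subst h
      rw [List.nodup_cons] at hnd
      exact hnd.1 (by simp)
    rw [List.idxOf_cons_ne _ hab]
    simpa using ih l₂ hnd.of_cons

lemma exists_not_mem_of_short {L T : List α} (hL : L.Nodup) (hT : T.Nodup)
    (h : T.length < L.length) : ∃ o ∈ L, o ∉ T := by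
  by_contra hc
  push_neg at hc
  exact absurd ((List.subperm_of_subset hL hc).length_le) (by omega)

lemma countP_erase_mem {x₀ : α} : ∀ (l : List α), l.Nodup → ∀ (xs : List α), xs.Nodup →
    x₀ ∈ xs →
    l.countP (fun o => decide (o ∈ xs)) =
      l.countP (fun o => decide (o ∈ xs.erase x₀)) + (if x₀ ∈ l then 1 else 0) := by
  intro l
  induction l with
  | nil => simp
  | cons c l ih =>
    intro hnd xs hxs hx₀
    rw [List.nodup_cons] at hnd
    have hmem : ∀ o, o ∈ xs.erase x₀ ↔ o ≠ x₀ ∧ o ∈ xs := fun o => hxs.mem_erase_iff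
    rw [List.countP_cons, List.countP_cons]
    by_cases hc : c = x₀
    · subst hc
      have h1 : l.countP (fun o => decide (o ∈ xs)) =
          l.countP (fun o => decide (o ∈ xs.erase c)) := by
        apply List.countP_congr
        intro o ho
        have : o ≠ c := fun h => hnd.1 (h ▸ ho)
        simp [hmem, this, ho]
      have hcc : c ∉ xs.erase c := fun h => ((hmem c).1 h).1 rfl
      simp [h1, hx₀, hcc]
    · have h2 : (if x₀ ∈ c :: l then 1 else 0) = (if x₀ ∈ l then 1 else 0) := by
        simp only [List.mem_cons]
        have : ¬ x₀ = c := fun h => hc h.symm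
        simp [this]
      have h3 : (decide (c ∈ xs) : Bool) = decide (c ∈ xs.erase x₀) := by
        by_cases h : c ∈ xs <;> simp [hmem, h, hc]
      rw [ih hnd.2 xs hxs hx₀, h3] at *
      omega

end BluffAux

section RunLemmas

variable {A : Type*} [DecidableEq A] {α : Type*} [DecidableEq α]

open BluffAux

/-- helper: effect of adding a newly-taken item to the taken list on the remaining list. -/
lemma filter_taken_cons (L : List α) (hL : L.Nodup) (T : List α) {e : α} {E₂ : List α}
    (hE : L.filter (fun o => !(T.contains o)) = e :: E₂) :
    L.filter (fun o => !((e :: T).contains o)) = E₂ := by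
  have h1 : L.filter (fun o => !((e :: T).contains o)) =
      (L.filter (fun o => !(T.contains o))).filter (fun o => !(o == e)) := by
    rw [List.filter_filter]
    apply List.filter_congr
    intro o _
    simp only [List.contains_cons, Bool.not_or]
  have hnd : (e :: E₂).Nodup := hE ▸ hL.filter _
  rw [h1, hE, List.filter_cons_of_neg (by simp)]
  rw [List.filter_eq_self]
  intro o ho
  simp only [Bool.not_eq_true', beq_eq_false_iff_ne, ne_eq]
  intro hoe
  exact (List.nodup_cons.1 hnd).1 (hoe ▸ ho)

/-- The run where every agent reports the same full ranking `L` is a zip. -/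
lemma SAevents_const (L : List α) (hL : L.Nodup) :
    ∀ (π' : List A) (T : List α),
      SAevents (fun _ : A => L) π' T = π'.zip (L.filter (fun o => !(T.contains o))) := by
  intro π'
  induction π' with
  | nil => intro T; simp [SAevents]
  | cons a rest ih =>
    intro T
    cases hE : (L.filter (fun o => !(T.contains o))).head? with
    | none =>
      rw [SAevents, hE, List.head?_eq_none_iff.1 hE, List.zip_nil_right, ih T,
        List.head?_eq_none_iff.1 hE, List.zip_nil_right]
    | some e =>
      obtain ⟨E₂, hE2⟩ : ∃ E₂, L.filter (fun o => !(T.contains o)) = e :: E₂ := by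
        cases h : L.filter (fun o => !(T.contains o)) with
        | nil => rw [h] at hE; simp at hE
        | cons x xs => rw [h] at hE; simp at hE; exact ⟨xs, by rw [← hE]⟩
      have hev : SAevents (fun _ : A => L) (a :: rest) T
          = (a, e) :: SAevents (fun _ : A => L) rest (e :: T) := by
        rw [SAevents, hE]
      rw [hev, ih (e :: T), filter_taken_cons L hL T hE2, hE2, List.zip_cons_cons]

/-- The truthful run: structure of the event list. -/
lemma truthRun (truth : A → List α) (htr : ∀ a, (truth a).Nodup ∧ ∀ o : α, o ∈ truth a) :
    ∀ (π' : List A) (T : List α), T.Nodup →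
    (∀ a, T.length + π'.length ≤ (truth a).length) →
    ((SAevents truth π' T).map Prod.fst = π') ∧
    ((SAevents truth π' T).map Prod.snd).Nodup ∧
    (∀ p ∈ SAevents truth π' T, p.2 ∉ T) ∧
    (∀ pre p suf, SAevents truth π' T = pre ++ p :: suf →
        ∀ o ∈ suf.map Prod.snd, Prefers (truth p.1) p.2 o) := by
  intro π'
  induction π' with
  | nil =>
    intro T _ _
    refine ⟨rfl, by simp [SAevents], by simp [SAevents], ?_⟩
    intro pre p suf h
    simp only [SAevents] at h
    exact absurd h (by simp)
  | cons a rest ih =>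
    intro T hT hlen
    -- the filter is nonempty
    have hlenT : T.length < (truth a).length := by have := hlen a; simp at this; omega
    obtain ⟨o₀, ho₀L, ho₀T⟩ := exists_not_mem_of_short (htr a).1 hT hlenT
    have hne : (truth a).filter (fun o => !(T.contains o)) ≠ [] := by
      intro h
      rw [List.filter_eq_nil_iff] at h
      exact (h o₀ ho₀L) (by simpa using ho₀T)
    obtain ⟨x, hx⟩ : ∃ x, ((truth a).filter (fun o => !(T.contains o))).head? = some x := by
      cases h : ((truth a).filter (fun o => !(T.contains o))).head? with
      | none => exact absurd (List.head?_eq_none_iff.1 h) hne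
      | some x => exact ⟨x, rfl⟩
    obtain ⟨hxmem, hxp, hxmin⟩ := head_filter_min _ hx
    have hxT : x ∉ T := by simpa using hxp
    have hT' : (x :: T).Nodup := List.nodup_cons.2 ⟨hxT, hT⟩
    have hlen' : ∀ b, (x :: T).length + rest.length ≤ (truth b).length := by
      intro b; have := hlen b; simp at this ⊢; omega
    obtain ⟨ih1, ih2, ih3, ih4⟩ := ih (x :: T) hT' hlen'
    have hev : SAevents truth (a :: rest) T = (a, x) :: SAevents truth rest (x :: T) := by
      rw [SAevents, hx]
    refine ⟨?_, ?_, ?_, ?_⟩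
    · rw [hev]; simp [ih1]
    · rw [hev]
      simp only [List.map_cons, List.nodup_cons]
      exact ⟨fun hc => by
        obtain ⟨p, hp, hp2⟩ := List.mem_map.1 hc
        exact (ih3 p hp) (by simp [hp2]), ih2⟩
    · rw [hev]
      intro p hp
      rcases List.mem_cons.1 hp with rfl | hp'
      · exact hxT
      · intro hc
        exact (ih3 p hp') (List.mem_cons_of_mem _ hc)
    · rw [hev]
      intro pre p suf hsplit o ho
      cases pre with
      | nil =>
        simp only [List.nil_append, List.cons.injEq] at hsplit
        obtain ⟨rfl, rfl⟩ := hsplit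
        -- o is a later pick: o ∉ x :: T
        have homem : ∀ q ∈ SAevents truth rest (x :: T), q.2 ∉ (x :: T) := ih3
        obtain ⟨q, hq, hq2⟩ := List.mem_map.1 ho
        have hoT : o ∉ x :: T := hq2 ▸ homem q hq
        have hoTT : o ∉ T := fun hc => hoT (List.mem_cons_of_mem _ hc)
        have hox : o ≠ x := fun hc => hoT (hc ▸ List.mem_cons_self)
        have hole : List.idxOf x (truth a) ≤ List.idxOf o (truth a) :=
          hxmin o ((htr a).2 o) (by simpa using hoTT)
        have : List.idxOf x (truth a) ≠ List.idxOf o (truth a) := by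
          intro hc
          exact hox ((List.idxOf_inj (y := o) hxmem).1 hc).symm
        exact lt_of_le_of_ne hole this
      | cons q pre' =>
        simp only [List.cons_append, List.cons.injEq] at hsplit
        exact ih4 pre' p suf hsplit.2 o ho

end RunLemmas

section RunLemmas2

variable {A : Type*} [DecidableEq A] {α : Type*} [DecidableEq α]

open BluffAux

lemma filter_taken_cons' (L : List α) (hL : L.Nodup) (T : List α) (x : α) :
    L.filter (fun o => !((x :: T).contains o)) =
      (L.filter (fun o => !(T.contains o))).erase x := by
  have hnd : (L.filter (fun o => !(T.contains o))).Nodup := hL.filter _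
  rw [hnd.erase_eq_filter, List.filter_filter]
  apply List.filter_congr
  intro o _
  simp only [List.contains_cons, Bool.not_or, bne]

lemma notmem_erase_of_nodup {l : List α} (h : l.Nodup) (x : α) : x ∉ l.erase x :=
  fun hc => ((h.mem_erase_iff.1 hc).1) rfl

lemma devCount (i : A) (L : List α) (hL : L.Nodup) (hLc : ∀ o : α, o ∈ L)
    (prefs : A → List α) (hpo : ∀ a : A, a ≠ i → prefs a = L) :
    ∀ (π' : List A) (T : List α),
    (∀ x ∈ ((SAevents prefs π' T).filter (fun p => p.1 == i)).map Prod.snd,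
        x ∈ L.filter (fun o => !(T.contains o))) ∧
    (((SAevents prefs π' T).filter (fun p => p.1 == i)).map Prod.snd).Nodup ∧
    (∀ t, ((L.filter (fun o => !(T.contains o))).take t).countP
        (fun o => decide (o ∈ ((SAevents prefs π' T).filter (fun p => p.1 == i)).map Prod.snd))
      ≤ (π'.take t).countP (fun a => a == i)) := by
  intro π'
  induction π' with
  | nil =>
    intro T
    refine ⟨by simp [SAevents], by simp [SAevents], ?_⟩
    intro t
    simp [SAevents]
  | cons a rest ih =>
    intro T
    have hndE : (L.filter (fun o => !(T.contains o))).Nodup := hL.filter _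
    by_cases hai : a = i
    · cases hx : ((prefs a).filter (fun o => !(T.contains o))).head? with
      | none =>
        have hev : SAevents prefs (a :: rest) T = SAevents prefs rest T := by
          rw [SAevents, hx]
        rw [hev]
        obtain ⟨ih1, ih2, ih3⟩ := ih T
        refine ⟨ih1, ih2, ?_⟩
        intro t
        cases t with
        | zero => simp
        | succ t =>
          refine le_trans (ih3 (t + 1)) (le_trans (countP_take_succ_le _ _ _) ?_)
          simp [List.take_succ_cons, List.countP_cons, hai]
      | some x =>
        have hev : SAevents prefs (a :: rest) T
            = (a, x) :: SAevents prefs rest (x :: T) := by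
          rw [SAevents, hx]
        obtain ⟨hxmem, hxp, -⟩ := head_filter_min _ hx
        have hxT : x ∉ T := by simpa using hxp
        have hxE : x ∈ L.filter (fun o => !(T.contains o)) :=
          List.mem_filter.2 ⟨hLc x, by simpa⟩
        have hE' : L.filter (fun o => !((x :: T).contains o))
            = (L.filter (fun o => !(T.contains o))).erase x := filter_taken_cons' L hL T x
        obtain ⟨ih1, ih2, ih3⟩ := ih (x :: T)
        rw [hE'] at ih1 ih3
        set E := L.filter (fun o => !(T.contains o)) with hEdef
        set xs₂ := ((SAevents prefs rest (x :: T)).filter (fun p => p.1 == i)).map Prod.snd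
          with hxs₂
        have hxsval : ((SAevents prefs (a :: rest) T).filter (fun p => p.1 == i)).map Prod.snd
            = x :: xs₂ := by
          rw [hev]
          simp [List.filter_cons, hxs₂, hai]
        rw [hxsval]
        have hxnot : x ∉ xs₂ := fun hc => notmem_erase_of_nodup hndE x (ih1 x hc)
        refine ⟨?_, List.nodup_cons.2 ⟨hxnot, ih2⟩, ?_⟩
        · intro y hy
          rcases List.mem_cons.1 hy with rfl | hy'
          · exact hxE
          · exact List.erase_subset (ih1 y hy')
        · intro t
          cases t with
          | zero => simp
          | succ t =>
            have hRHS : ((a :: rest).take (t + 1)).countP (fun a => a == i)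
                = (rest.take t).countP (fun a => a == i) + 1 := by
              simp [List.take_succ_cons, List.countP_cons, hai]
            rw [hRHS]
            by_cases hxt : x ∈ E.take (t + 1)
            · have hperm := take_perm_erase E (t + 1) hxt
              rw [List.Perm.countP_eq _ hperm]
              simp only [Nat.add_sub_cancel, List.countP_cons]
              have hcongr : ((E.erase x).take t).countP (fun o => decide (o ∈ x :: xs₂))
                  = ((E.erase x).take t).countP (fun o => decide (o ∈ xs₂)) := by
                apply List.countP_congr
                intro o ho
                have hoe : o ∈ E.erase x := List.mem_of_mem_take ho
                have : o ≠ x := (hndE.mem_erase_iff.1 hoe).1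
                simp [this]
              have hstep : List.countP (fun o => decide (o ∈ x :: xs₂))
                    ((E.erase x).take t) + (if decide (x ∈ x :: xs₂) then 1 else 0)
                  = ((E.erase x).take t).countP (fun o => decide (o ∈ xs₂)) + 1 := by
                rw [hcongr]
                simp
              rw [hstep]
              exact Nat.add_le_add_right (ih3 t) 1
            · have heq := take_erase_of_not_mem E (t + 1) hxt
              have hcongr : (E.take (t + 1)).countP (fun o => decide (o ∈ x :: xs₂))
                  = ((E.erase x).take (t + 1)).countP (fun o => decide (o ∈ xs₂)) := by
                rw [heq]
                apply List.countP_congr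
                intro o ho
                have : o ≠ x := fun hc => hxt (hc ▸ ho)
                simp [this]
              rw [hcongr]
              exact le_trans (ih3 (t + 1)) (countP_take_succ_le _ _ _)
    · -- a ≠ i
      have hpa : (prefs a).filter (fun o => !(T.contains o))
          = L.filter (fun o => !(T.contains o)) := by rw [hpo a hai]
      cases hx : (( prefs a).filter (fun o => !(T.contains o))).head? with
      | none =>
        have hEnil : L.filter (fun o => !(T.contains o)) = [] := by
          rw [← hpa]; exact List.head?_eq_none_iff.1 hx
        have hev : SAevents prefs (a :: rest) T = SAevents prefs rest T := by
          rw [SAevents, hx]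
        rw [hev]
        obtain ⟨ih1, ih2, ih3⟩ := ih T
        refine ⟨ih1, ih2, ?_⟩
        intro t
        rw [hEnil]
        simp
      | some e =>
        have hev : SAevents prefs (a :: rest) T
            = (a, e) :: SAevents prefs rest (e :: T) := by
          rw [SAevents, hx]
        have heE : (L.filter (fun o => !(T.contains o))).head? = some e := by
          rw [← hpa]; exact hx
        obtain ⟨E₂, hE2⟩ : ∃ E₂, L.filter (fun o => !(T.contains o)) = e :: E₂ := by
          cases h : L.filter (fun o => !(T.contains o)) with
          | nil => rw [h] at heE; simp at heE
          | cons y ys => rw [h] at heE; simp at heE; exact ⟨ys, by rw [← heE]⟩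
        have hE' : L.filter (fun o => !((e :: T).contains o)) = E₂ :=
          filter_taken_cons L hL T hE2
        obtain ⟨ih1, ih2, ih3⟩ := ih (e :: T)
        rw [hE'] at ih1 ih3
        have hxsval : ((SAevents prefs (a :: rest) T).filter (fun p => p.1 == i)).map Prod.snd
            = ((SAevents prefs rest (e :: T)).filter (fun p => p.1 == i)).map Prod.snd := by
          rw [hev]
          simp [List.filter_cons, hai]
        rw [hxsval, hE2]
        have heE₂ : e ∉ E₂ := by
          have : (e :: E₂).Nodup := hE2 ▸ hndE
          exact (List.nodup_cons.1 this).1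
        refine ⟨?_, ih2, ?_⟩
        · intro y hy
          exact List.mem_cons_of_mem _ (ih1 y hy)
        · intro t
          cases t with
          | zero => simp
          | succ t =>
            rw [List.take_succ_cons, List.countP_cons]
            have henot : (decide (e ∈ ((SAevents prefs rest (e :: T)).filter
                (fun p => p.1 == i)).map Prod.snd) : Bool) = false := by
              simp only [decide_eq_false_iff_not]
              intro hc
              exact heE₂ (ih1 e hc)
            rw [henot]
            have hRHS : ((a :: rest).take (t + 1)).countP (fun b => b == i)
                = (rest.take t).countP (fun b => b == i) := by
              simp [List.take_succ_cons, List.countP_cons, hai]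
            rw [hRHS]
            simpa using ih3 t

end RunLemmas2

section RunLemmas3

variable {A : Type*} [DecidableEq A] {α : Type*} [DecidableEq α]

open BluffAux

lemma bsCount (i : A) : ∀ (π' : List A) (E : List α), E.Nodup → π'.length ≤ E.length →
    (∀ b ∈ ((π'.zip E).filter (fun p => p.1 == i)).map Prod.snd, b ∈ E) ∧
    (((π'.zip E).filter (fun p => p.1 == i)).map Prod.snd).Nodup ∧
    ∀ t, (E.take t).countP
        (fun o => decide (o ∈ ((π'.zip E).filter (fun p => p.1 == i)).map Prod.snd))
      = (π'.take t).countP (fun a => a == i) := by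
  intro π'
  induction π' with
  | nil =>
    intro E _ _
    refine ⟨by simp, by simp, ?_⟩
    intro t
    simp
  | cons a rest ih =>
    intro E hnd hlen
    cases E with
    | nil => simp at hlen
    | cons e E₂ =>
      have hlen2 : rest.length ≤ E₂.length := by simp at hlen; omega
      obtain ⟨ih1, ih2, ih3⟩ := ih E₂ (List.nodup_cons.1 hnd).2 hlen2
      have heE₂ : e ∉ E₂ := (List.nodup_cons.1 hnd).1
      have hzip : (a :: rest).zip (e :: E₂) = (a, e) :: rest.zip E₂ := rfl
      set bs₂ := ((rest.zip E₂).filter (fun p => p.1 == i)).map Prod.snd with hbs₂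
      have hebs₂ : e ∉ bs₂ := fun hc => heE₂ (ih1 e hc)
      by_cases hai : a = i
      · have hbs : (((a :: rest).zip (e :: E₂)).filter (fun p => p.1 == i)).map Prod.snd
            = e :: bs₂ := by
          rw [hzip]
          simp [List.filter_cons, hai, hbs₂]
        rw [hbs]
        refine ⟨?_, List.nodup_cons.2 ⟨hebs₂, ih2⟩, ?_⟩
        · intro b hb
          rcases List.mem_cons.1 hb with rfl | hb'
          · exact List.mem_cons_self
          · exact List.mem_cons_of_mem _ (ih1 b hb')
        · intro t
          cases t with
          | zero => simp
          | succ t =>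
            rw [List.take_succ_cons, List.take_succ_cons, List.countP_cons, List.countP_cons]
            have hc1 : (E₂.take t).countP (fun o => decide (o ∈ e :: bs₂))
                = (E₂.take t).countP (fun o => decide (o ∈ bs₂)) := by
              apply List.countP_congr
              intro o ho
              have : o ≠ e := fun hc => heE₂ (hc ▸ List.mem_of_mem_take ho)
              simp [this]
            rw [hc1, ih3 t]
            simp [hai]
      · have hbs : (((a :: rest).zip (e :: E₂)).filter (fun p => p.1 == i)).map Prod.snd
            = bs₂ := by
          rw [hzip]
          simp [List.filter_cons, hai, hbs₂]
        rw [hbs]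
        refine ⟨fun b hb => List.mem_cons_of_mem _ (ih1 b hb), ih2, ?_⟩
        intro t
        cases t with
        | zero => simp
        | succ t =>
          rw [List.take_succ_cons, List.take_succ_cons, List.countP_cons, List.countP_cons]
          have hc1 : (decide (e ∈ bs₂) : Bool) = false := by simp [hebs₂]
          rw [hc1, ih3 t]
          simp [hai]

end RunLemmas3

section ConvLemma

variable {α : Type*} [DecidableEq α]

open BluffAux

lemma sum_map_erase (u : α → ℝ) {xs : List α} {x : α} (hx : x ∈ xs) :
    (xs.map u).sum = u x + ((xs.erase x).map u).sum := by
  have hperm : List.Perm xs (x :: xs.erase x) := List.perm_cons_erase hx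
  rw [(hperm.map u).sum_eq]
  simp

lemma convSum (u : α → ℝ) (hu : ∀ o : α, 0 < u o) :
    ∀ (E : List α), E.Nodup →
    ∀ (xs bs : List α), (∀ x ∈ xs, x ∈ E) → xs.Nodup →
      (∀ b ∈ bs, b ∈ E) → bs.Nodup →
      (∀ t, (E.take t).countP (fun o => decide (o ∈ xs))
          ≤ (E.take t).countP (fun o => decide (o ∈ bs))) →
      (∀ b ∈ bs, ∀ y ∈ E.drop (E.idxOf b), u y ≤ u b) →
      (xs.map u).sum ≤ (bs.map u).sum := by
  intro E
  induction E with
  | nil =>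
    intro _ xs bs hxsE _ hbsE _ _ _
    have h1 : xs = [] := List.eq_nil_iff_forall_not_mem.2 (fun x hx => by simpa using hxsE x hx)
    have h2 : bs = [] := List.eq_nil_iff_forall_not_mem.2 (fun b hb => by simpa using hbsE b hb)
    simp [h1, h2]
  | cons e E₂ ih =>
    intro hnd xs bs hxsE hxs hbsE hbs hcount hpref
    have heE₂ : e ∉ E₂ := (List.nodup_cons.1 hnd).1
    have hndE₂ : E₂.Nodup := (List.nodup_cons.1 hnd).2
    have hdropred : ∀ b ∈ bs, b ≠ e → ∀ y ∈ E₂.drop (E₂.idxOf b), u y ≤ u b := by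
      intro b hb hbe y hy
      apply hpref b hb
      rw [List.idxOf_cons_ne _ (fun h => hbe h.symm)]
      simpa [List.drop_succ_cons] using hy
    by_cases hexs : e ∈ xs
    · have hebs : e ∈ bs := by
        by_contra hebs
        have h1 := hcount 1
        rw [show (e :: E₂).take 1 = [e] from rfl] at h1
        simp [hexs, hebs] at h1
      have hsx := sum_map_erase u hexs
      have hsb := sum_map_erase u hebs
      rw [hsx, hsb]
      have hmain : ((xs.erase e).map u).sum ≤ ((bs.erase e).map u).sum := by
        apply ih hndE₂ (xs.erase e) (bs.erase e)
        · intro x hx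
          obtain ⟨hxne, hxmem⟩ := hxs.mem_erase_iff.1 hx
          rcases List.mem_cons.1 (hxsE x hxmem) with h | h
          · exact absurd h hxne
          · exact h
        · exact hxs.erase e
        · intro b hb
          obtain ⟨hbne, hbmem⟩ := hbs.mem_erase_iff.1 hb
          rcases List.mem_cons.1 (hbsE b hbmem) with h | h
          · exact absurd h hbne
          · exact h
        · exact hbs.erase e
        · intro t
          have h1 := hcount (t + 1)
          rw [List.take_succ_cons, List.countP_cons, List.countP_cons] at h1
          have hcx : (E₂.take t).countP (fun o => decide (o ∈ xs))
              = (E₂.take t).countP (fun o => decide (o ∈ xs.erase e)) := by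
            apply List.countP_congr
            intro o ho
            have hoe : o ≠ e := fun hc => heE₂ (hc ▸ List.mem_of_mem_take ho)
            simp [hxs.mem_erase_iff, hoe]
          have hcb : (E₂.take t).countP (fun o => decide (o ∈ bs))
              = (E₂.take t).countP (fun o => decide (o ∈ bs.erase e)) := by
            apply List.countP_congr
            intro o ho
            have hoe : o ≠ e := fun hc => heE₂ (hc ▸ List.mem_of_mem_take ho)
            simp [hbs.mem_erase_iff, hoe]
          rw [hcx, hcb] at h1
          simp [hexs, hebs] at h1
          omega
        · intro b hb
          exact hdropred b (List.erase_subset hb) (hbs.mem_erase_iff.1 hb).1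
      linarith
    · have hxsE₂ : ∀ x ∈ xs, x ∈ E₂ := by
        intro x hx
        rcases List.mem_cons.1 (hxsE x hx) with h | h
        · exact absurd (h ▸ hx) hexs
        · exact h
      by_cases hebs : e ∈ bs
      · by_cases hxsnil : xs = []
        · subst hxsnil
          simp only [List.map_nil, List.sum_nil]
          apply List.sum_nonneg
          intro v hv
          obtain ⟨b, _, rfl⟩ := List.mem_map.1 hv
          exact le_of_lt (hu b)
        · obtain ⟨x₁, hx₁⟩ := List.exists_mem_of_ne_nil xs hxsnil
          have hfne : E₂.filter (fun o => decide (o ∈ xs)) ≠ [] := by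
            intro hnil
            rw [List.filter_eq_nil_iff] at hnil
            exact hnil x₁ (hxsE₂ x₁ hx₁) (by simpa using hx₁)
          obtain ⟨x₀, hx₀head⟩ : ∃ x₀, (E₂.filter (fun o => decide (o ∈ xs))).head? = some x₀ := by
            cases h : (E₂.filter (fun o => decide (o ∈ xs))).head? with
            | none => exact absurd (List.head?_eq_none_iff.1 h) hfne
            | some y => exact ⟨y, rfl⟩
          obtain ⟨hx₀E₂, hx₀p, hx₀min⟩ := head_filter_min _ hx₀head
          have hx₀xs : x₀ ∈ xs := by simpa using hx₀p
          have hux₀ : u x₀ ≤ u e := by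
            apply hpref e hebs
            rw [List.idxOf_cons_self]
            exact List.mem_cons_of_mem _ hx₀E₂
          have hsx := sum_map_erase u hx₀xs
          have hsb := sum_map_erase u hebs
          rw [hsx, hsb]
          have hmain : ((xs.erase x₀).map u).sum ≤ ((bs.erase e).map u).sum := by
            apply ih hndE₂ (xs.erase x₀) (bs.erase e)
            · intro x hx
              exact hxsE₂ x (List.erase_subset hx)
            · exact hxs.erase x₀
            · intro b hb
              obtain ⟨hbne, hbmem⟩ := hbs.mem_erase_iff.1 hb
              rcases List.mem_cons.1 (hbsE b hbmem) with h | h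
              · exact absurd h hbne
              · exact h
            · exact hbs.erase e
            · intro t
              have h1 := hcount (t + 1)
              rw [List.take_succ_cons, List.countP_cons, List.countP_cons] at h1
              have hcb : (E₂.take t).countP (fun o => decide (o ∈ bs))
                  = (E₂.take t).countP (fun o => decide (o ∈ bs.erase e)) := by
                apply List.countP_congr
                intro o ho
                have hoe : o ≠ e := fun hc => heE₂ (hc ▸ List.mem_of_mem_take ho)
                simp [hbs.mem_erase_iff, hoe]
              rw [hcb] at h1
              simp only [hexs, hebs, decide_eq_true_eq, if_neg, if_pos, decide_eq_false_iff_not,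
                not_false_eq_true] at h1
              by_cases hx₀t : x₀ ∈ E₂.take t
              · have herase := countP_erase_mem (x₀ := x₀) (E₂.take t)
                  ((List.take_sublist _ _).nodup hndE₂) xs hxs hx₀xs
                rw [if_pos hx₀t] at herase
                omega
              · have hzero : (E₂.take t).countP (fun o => decide (o ∈ xs.erase x₀)) = 0 := by
                  rw [List.countP_eq_zero]
                  intro o ho
                  simp only [decide_eq_true_eq]
                  intro hoxs'
                  have hoxs : o ∈ xs := List.erase_subset hoxs'
                  have hoE₂ : o ∈ E₂ := hxsE₂ o hoxs
                  have hlt : E₂.idxOf o < t := (mem_take_iff_idxOf_lt E₂ t hoE₂).1 ho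
                  have hle : E₂.idxOf x₀ ≤ E₂.idxOf o := hx₀min o hoE₂ (by simpa using hoxs)
                  exact hx₀t ((mem_take_iff_idxOf_lt E₂ t hx₀E₂).2 (lt_of_le_of_lt hle hlt))
                rw [hzero]
                exact Nat.zero_le _
            · intro b hb
              exact hdropred b (List.erase_subset hb) (hbs.mem_erase_iff.1 hb).1
          linarith
      · apply ih hndE₂ xs bs hxsE₂ hxs
        · intro b hb
          rcases List.mem_cons.1 (hbsE b hb) with h | h
          · exact absurd (h ▸ hb) hebs
          · exact h
        · exact hbs
        · intro t
          have h1 := hcount (t + 1)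
          rw [List.take_succ_cons, List.countP_cons, List.countP_cons] at h1
          simpa [hexs, hebs] using h1
        · intro b hb
          have hbne : b ≠ e := fun hc => hebs (hc ▸ hb)
          exact hdropred b hb hbne

end ConvLemma

lemma zip_fst_snd {β γ : Type*} : ∀ (l : List (β × γ)),
    (l.map Prod.fst).zip (l.map Prod.snd) = l := by
  intro l; induction l <;> simp_all

/-- The bluff profile is a pure Nash equilibrium under every utility
profile consistent with the truthful ordinal preferences. -/
theorem bluff_PNE_all_consistent_utilities {n m : ℕ} (π : List (Fin n))
    (truth : Fin n → List (Fin m))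
    (hπ : π.length = m) (htruth : ∀ i, IsRanking (truth i)) :
    ∀ u : Fin n → Fin m → ℝ, (∀ i, Consistent (truth i) (u i)) →
      IsPNE π (bluff π truth) u := by
  intro u hu i r _
  have htrlen : ∀ a, (truth a).length = m := by
    intro a
    have h1 : (truth a).toFinset = Finset.univ :=
      Finset.eq_univ_iff_forall.2 (fun o => List.mem_toFinset.2 ((htruth a).2 o))
    have h2 := List.toFinset_card_of_nodup (htruth a).1
    rw [h1, Finset.card_univ, Fintype.card_fin] at h2
    omega
  obtain ⟨hfst, hsndnd, -, hmin⟩ := truthRun truth (fun a => ⟨(htruth a).1, (htruth a).2⟩)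
    π [] List.nodup_nil (fun a => by simp [htrlen a, hπ])
  set ev := SAevents truth π [] with hevdef
  set L := pickOrder π truth with hLdef
  have hLev : L = ev.map Prod.snd := rfl
  have hLnd : L.Nodup := by rw [hLev]; exact hsndnd
  have hLlen : L.length = m := by
    rw [hLev, List.length_map, ← List.length_map (as := ev) Prod.fst, hfst, hπ]
  have hLc : ∀ o : Fin m, o ∈ L := by
    have hcard : L.toFinset = Finset.univ := by
      apply Finset.eq_univ_of_card
      rw [List.toFinset_card_of_nodup hLnd, hLlen, Fintype.card_fin]
    intro o
    rw [← List.mem_toFinset, hcard]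
    exact Finset.mem_univ o
  have hfilnil : L.filter (fun o => !(([] : List (Fin m)).contains o)) = L := by
    simp
  -- deviation side
  set prefs := Function.update (bluff π truth) i r with hprefs
  have hpo : ∀ a : Fin n, a ≠ i → prefs a = L := by
    intro a ha
    rw [hprefs, Function.update_of_ne ha]
    rfl
  set xs := ((SAevents prefs π []).filter (fun p => p.1 == i)).map Prod.snd with hxsdef
  obtain ⟨hxs1, hxs2, hxs3⟩ := devCount i L hLnd hLc prefs hpo π []
  rw [hfilnil] at hxs1 hxs3
  -- bluff side
  set bs := ((π.zip L).filter (fun p => p.1 == i)).map Prod.snd with hbsdef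
  obtain ⟨hbs1, hbs2, hbs3⟩ := bsCount i π L hLnd (by rw [hLlen, hπ])
  -- counting comparison
  have hcount : ∀ t, (L.take t).countP (fun o => decide (o ∈ xs))
      ≤ (L.take t).countP (fun o => decide (o ∈ bs)) := by
    intro t
    exact le_of_le_of_eq (hxs3 t) (hbs3 t).symm
  -- preference property of the bluff picks
  have hzipev : π.zip L = ev := by
    rw [← hfst, hLev]
    exact zip_fst_snd ev
  have hpref : ∀ b ∈ bs, ∀ y ∈ L.drop (L.idxOf b), u i y ≤ u i b := by
    intro b hb y hy
    obtain ⟨p, hpmem, hpi⟩ := List.mem_map.1 hb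
    have hp1 : p.1 = i := by simpa using (List.mem_filter.1 hpmem).2
    have hpev : p ∈ ev := by rw [← hzipev]; exact (List.mem_filter.1 hpmem).1
    obtain ⟨pre, suf, hsplit⟩ := List.append_of_mem hpev
    have hLsplit : L = pre.map Prod.snd ++ b :: suf.map Prod.snd := by
      rw [hLev, hsplit]
      simp [hpi]
    have hdrop : L.drop (L.idxOf b) = b :: suf.map Prod.snd := by
      rw [hLsplit]
      exact BluffAux.drop_idxOf _ _ (hLsplit ▸ hLnd)
    rw [hdrop] at hy
    rcases List.mem_cons.1 hy with rfl | hy'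
    · exact le_refl _
    · have hPref : Prefers (truth i) b y := by
        have := hmin pre p suf hsplit y hy'
        rwa [hp1, hpi] at this
      exact le_of_lt (((hu i).2 b y).2 hPref)
  have hsum := convSum (u i) (hu i).1 L hLnd xs bs hxs1 hxs2 hbs1 hbs2 hcount hpref
  -- translate to utilOf of allocations
  have hallocdev : SAalloc π prefs i = xs.toFinset := rfl
  have hallocbluff : SAalloc π (bluff π truth) i = bs.toFinset := by
    rw [SAalloc, hbsdef]
    have hconst : SAevents (bluff π truth) π ([] : List (Fin m))
        = π.zip (L.filter (fun o => !(([] : List (Fin m)).contains o))) :=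
      SAevents_const L hLnd π []
    rw [hconst, hfilnil]
  rw [hallocdev, hallocbluff]
  unfold utilOf
  rw [List.sum_toFinset _ hxs2, List.sum_toFinset _ hbs2]
  exact hsum
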